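/- arXiv:2112.01798 — 7 statements merged into one kernel-verified Lean document; each statement's English description precedes it below -/
import Mathlib

section
/- Fix a point x̄ ∈ dom φ that is not M-stationary, suppose φ is bounded below by an affine function, and let τ > 1, γ⁰ > 0, δ ∈ (0,1). For each i ∈ ℕ let x^i be a global minimizer of the proximal subproblem at x̄ with parameter γ_i := τ^i γ⁰. Then there exists an index i ∈ ℕ such that the acceptance criterion ψ(x^i) ≤ ψ(x̄) − δ(γ_i/2)‖x^i − x̄‖² holds. (Lemma 3.2: finiteness of the inner loop of the monotone proximal gradient method.) -/
open Filter Topology RealInnerProductSpace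

noncomputable section

variable {E : Type*} [NormedAddCommGroup E] [InnerProductSpace ℝ E] [FiniteDimensional ℝ E]

/-- The objective `ψ = f + φ`, with values in `EReal`. -/
def psi (f : E → ℝ) (φ : E → EReal) (x : E) : EReal :=
  (f x : EReal) + φ x

/-- `φ` is bounded from below by an affine function. -/
def AffineBoundedBelow (φ : E → EReal) : Prop :=
  ∃ (a : E) (b : ℝ), ∀ x : E, ((⟪a, x⟫ + b : ℝ) : EReal) ≤ φ x

/-- Objective of the proximal subproblem at `xb` with parameter `γ`. -/
def proxObj (f : E → ℝ) (φ : E → EReal) (xb : E) (γ : ℝ) (x : E) : EReal :=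
  ((f xb + ⟪gradient f xb, x - xb⟫ + γ / 2 * ‖x - xb‖ ^ 2 : ℝ) : EReal) + φ x

/-- `x` is a global minimizer of the proximal subproblem at `xb` with parameter `γ`. -/
def IsProxMin (f : E → ℝ) (φ : E → EReal) (xb : E) (γ : ℝ) (x : E) : Prop :=
  ∀ y : E, proxObj f φ xb γ x ≤ proxObj f φ xb γ y

/-- Fréchet (regular) subdifferential of `φ` at `x`. -/
def FrechetSubdiff (φ : E → EReal) (x : E) : Set E :=
  {η : E | ∀ ε : ℝ, 0 < ε →
    ∀ᶠ y in 𝓝[≠] x, φ x + ((⟪η, y - x⟫ - ε * ‖y - x‖ : ℝ) : EReal) ≤ φ y}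

/-- Limiting (Mordukhovich) subdifferential of `φ` at `x`. -/
def LimitingSubdiff (φ : E → EReal) (x : E) : Set E :=
  {η : E | ∃ u v : ℕ → E,
    Tendsto u atTop (𝓝 x) ∧
    Tendsto (fun j => φ (u j)) atTop (𝓝 (φ x)) ∧
    Tendsto v atTop (𝓝 η) ∧
    ∀ j : ℕ, v j ∈ FrechetSubdiff φ (u j)}

/-- `x` is an M-stationary point of `min f + φ`. -/
def MStationary (f : E → ℝ) (φ : E → EReal) (x : E) : Prop :=
  φ x ≠ ⊤ ∧ -gradient f x ∈ LimitingSubdiff φ x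

/-- `ψ` is bounded from below on `dom φ`. -/
def PsiBddBelow (f : E → ℝ) (φ : E → EReal) : Prop :=
  ∃ c : ℝ, ∀ z : E, φ z ≠ ⊤ → (c : EReal) ≤ psi f φ z

/-- The monotone proximal gradient method (Algorithm 3.1). -/
structure MonoPG (f : E → ℝ) (φ : E → EReal) (τ γmin γmax δ : ℝ)
    (x : ℕ → E) (γ : ℕ → ℝ) : Prop where
  dom : ∀ k : ℕ, φ (x k) ≠ ⊤
  stepsize : ∀ k : ℕ, ∃ γ0 : ℝ, ∃ i : ℕ, γ0 ∈ Set.Icc γmin γmax ∧ γ k = τ ^ i * γ0 ∧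
    (1 ≤ i → ∃ xh : E, IsProxMin f φ (x k) (γ k / τ) xh ∧
      psi f φ (x k) < psi f φ xh + ((δ * (γ k / τ) / 2 * ‖xh - x k‖ ^ 2 : ℝ) : EReal))
  isMin : ∀ k : ℕ, IsProxMin f φ (x k) (γ k) (x (k + 1))
  accept : ∀ k : ℕ,
    psi f φ (x (k + 1)) + ((δ * γ k / 2 * ‖x (k + 1) - x k‖ ^ 2 : ℝ) : EReal) ≤ psi f φ (x k)

/-- The nonmonotone reference value `max_{j=0,…,min{k,m}} ψ(x^{k-j})`. -/
def nmax (f : E → ℝ) (φ : E → EReal) (x : ℕ → E) (m k : ℕ) : EReal :=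
  (Finset.range (min k m + 1)).sup fun j => psi f φ (x (k - j))

/-- The nonmonotone proximal gradient method (Algorithm 4.1). -/
structure NonmonoPG (f : E → ℝ) (φ : E → EReal) (τ γmin γmax δ : ℝ) (m : ℕ)
    (x : ℕ → E) (γ : ℕ → ℝ) : Prop where
  dom : ∀ k : ℕ, φ (x k) ≠ ⊤
  stepsize : ∀ k : ℕ, ∃ γ0 : ℝ, ∃ i : ℕ, γ0 ∈ Set.Icc γmin γmax ∧ γ k = τ ^ i * γ0 ∧
    (1 ≤ i → ∃ xh : E, IsProxMin f φ (x k) (γ k / τ) xh ∧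
      nmax f φ x m k < psi f φ xh + ((δ * (γ k / τ) / 2 * ‖xh - x k‖ ^ 2 : ℝ) : EReal))
  isMin : ∀ k : ℕ, IsProxMin f φ (x k) (γ k) (x (k + 1))
  accept : ∀ k : ℕ,
    psi f φ (x (k + 1)) + ((δ * γ k / 2 * ‖x (k + 1) - x k‖ ^ 2 : ℝ) : EReal) ≤ nmax f φ x m k

/-- `l` realizes the nonmonotone maximum `ψ(x^{l(k)}) = max_{j=0,…,m_k} ψ(x^{k-j})`,
with `l k ∈ {k - m_k, …, k}`. -/
def RealizesNMax (f : E → ℝ) (φ : E → EReal) (x : ℕ → E) (m : ℕ) (l : ℕ → ℕ) : Prop :=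
  ∀ k : ℕ, k - min k m ≤ l k ∧ l k ≤ k ∧ psi f φ (x (l k)) = nmax f φ x m k

/-- `ψ` is uniformly continuous on the sublevel set `L_ψ(x⁰)`. -/
def UnifContOnLevelSet (f : E → ℝ) (φ : E → EReal) (x0 : E) : Prop :=
  ∀ ε : ℝ, 0 < ε → ∃ η : ℝ, 0 < η ∧ ∀ u v : E,
    psi f φ u ≤ psi f φ x0 → psi f φ v ≤ psi f φ x0 → ‖u - v‖ ≤ η →
    psi f φ u ≤ psi f φ v + (ε : EReal)

/-- `φ` is continuous on its domain `dom φ`. -/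
def ContOnDom (φ : E → EReal) : Prop :=
  ∀ x : E, φ x ≠ ⊤ → ∀ y : ℕ → E, (∀ j : ℕ, φ (y j) ≠ ⊤) →
    Tendsto y atTop (𝓝 x) → Tendsto (fun j => φ (y j)) atTop (𝓝 (φ x))

/-!
Suppose the acceptance test failed for every `i`, and write `dᵢ = xⁱ - x̄`. Comparing the
subproblem's value at `xⁱ` with its value at `x̄`, and bounding `φ` below by its affine minorant,
gives `(γᵢ / 2) ‖dᵢ‖² ≤ C + L ‖dᵢ‖`; as `γᵢ → ∞`, `xⁱ → x̄`. The failed test bounds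
`(1 - δ) (γᵢ / 2) ‖dᵢ‖²` by the first-order Taylor remainder of `f`, which is `o(‖dᵢ‖)`, so
`γᵢ dᵢ → 0`. Optimality of `xⁱ` makes `-∇f(x̄) - γᵢ dᵢ` a Fréchet subgradient of `φ` at `xⁱ`,
and `φ(xⁱ) → φ(x̄)` by lower semicontinuity and the comparison with `x̄`. In the limit
`-∇f(x̄) ∈ ∂φ(x̄)`: `x̄` would be M-stationary.
-/

lemma EReal.add_coe_sub_le_of_coe_add_le {r s : ℝ} {A B : EReal}
    (h : (r : EReal) + A ≤ s + B) : A + ((r - s : ℝ) : EReal) ≤ B := by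
  induction A using EReal.rec with
  | bot => simp
  | top =>
    induction B using EReal.rec with
    | top => exact le_top
    | _ => simp_all [← EReal.coe_add]
  | coe a =>
    induction B using EReal.rec with
    | bot => simp [← EReal.coe_add] at h
    | coe b =>
      norm_cast at h ⊢
      linarith
    | top => exact le_top

lemma tendsto_zero_of_mul_sq_le_add {ι : Type*} {l : Filter ι} {γ t : ι → ℝ} {C L : ℝ}
    (hγ : Tendsto γ l atTop) (ht : ∀ i, 0 ≤ t i) (h : ∀ i, γ i * t i ^ 2 ≤ C + L * t i) :
    Tendsto t l (𝓝 0) := by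
  refine tendsto_order.2 ⟨fun q hq => .of_forall fun i => hq.trans_le (ht i), fun ε hε => ?_⟩
  filter_upwards [hγ.eventually_gt_atTop (|C| / ε ^ 2 + |L| / ε)] with i hi
  by_contra! hεt
  have htpos : 0 < t i := hε.trans_le hεt
  refine hi.not_ge ?_
  calc γ i = γ i * t i ^ 2 / t i ^ 2 := by field_simp
    _ ≤ (|C| + |L| * t i) / t i ^ 2 := by
        gcongr
        exact (h i).trans (by gcongr; exacts [le_abs_self C, le_abs_self L])
    _ = |C| / t i ^ 2 + |L| / t i := by field_simp
    _ ≤ |C| / ε ^ 2 + |L| / ε := by gcongr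

lemma tendsto_smul_zero_of_isLittleO {ι F : Type*} [SeminormedAddCommGroup F] [NormedSpace ℝ F]
    {l : Filter ι} {γ R : ι → ℝ} {d : ι → F} {κ : ℝ} (hκ : 0 < κ) (hγ : ∀ i, 0 ≤ γ i)
    (hR : R =o[l] d) (h : ∀ i, κ * γ i * ‖d i‖ ^ 2 < R i) :
    Tendsto (fun i => γ i • d i) l (𝓝 0) := by
  refine Metric.tendsto_nhds.2 fun ε hε => ?_
  filter_upwards [hR.def (mul_pos hκ hε)] with i hi
  have hlt : κ * γ i * ‖d i‖ ^ 2 < κ * ε * ‖d i‖ := (h i).trans_le ((le_abs_self _).trans hi)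
  have hd : 0 < ‖d i‖ := (norm_nonneg _).lt_of_ne fun h0 => by simp [← h0] at hlt
  rw [dist_zero_right, norm_smul, Real.norm_of_nonneg (hγ i)]
  refine lt_of_mul_lt_mul_left ?_ (mul_pos hκ hd).le
  linarith

lemma LowerSemicontinuousAt.tendsto_of_eventually_le {α β ι : Type*} [TopologicalSpace α]
    [LinearOrder β] [TopologicalSpace β] [OrderTopology β] {φ : α → β} {x : α}
    (hφ : LowerSemicontinuousAt φ x) {l : Filter ι} {u : ι → α} {g : ι → β}
    (hu : Tendsto u l (𝓝 x)) (hg : Tendsto g l (𝓝 (φ x))) (hle : ∀ᶠ i in l, φ (u i) ≤ g i) :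
    Tendsto (fun i => φ (u i)) l (𝓝 (φ x)) :=
  tendsto_order.2 ⟨fun q hq => hu.eventually (hφ q hq), fun _ hq =>
    (hle.and (hg.eventually (gt_mem_nhds hq))).mono fun _ hi => hi.1.trans_lt hi.2⟩

lemma AffineBoundedBelow.ne_bot {F : Type*} [NormedAddCommGroup F] [InnerProductSpace ℝ F]
    {φ : F → EReal} (h : AffineBoundedBelow φ) (x : F) :
    φ x ≠ ⊥ := by
  obtain ⟨a, b, hab⟩ := h
  exact ne_bot_of_le_ne_bot (EReal.coe_ne_bot _) (hab x)

lemma mem_frechetSubdiff_of_forall_add_sub_sq_le {F : Type*} [NormedAddCommGroup F]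
    [InnerProductSpace ℝ F] {φ : F → EReal} {x η : F} {γ : ℝ}
    (h : ∀ y, φ x + ((⟪η, y - x⟫ - γ / 2 * ‖y - x‖ ^ 2 : ℝ) : EReal) ≤ φ y) :
    η ∈ FrechetSubdiff φ x := by
  intro ε hε
  have hsmall : Tendsto (fun y => γ * ‖y - x‖) (𝓝 x) (𝓝 0) :=
    (continuous_const.mul (continuous_id.sub continuous_const).norm).tendsto' x 0 (by simp)
  filter_upwards [nhdsWithin_le_nhds (hsmall.eventually (gt_mem_nhds (by positivity : 0 < 2 * ε)))]
    with y hy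
  refine le_trans (add_le_add_right (EReal.coe_le_coe_iff.2 ?_) _) (h y)
  nlinarith [norm_nonneg (y - x)]

section IsProxMin

variable {f : E → ℝ} {φ : E → EReal} {xb x : E} {γ : ℝ}

lemma IsProxMin.add_inner_sub_sq_le (hx : IsProxMin f φ xb γ x) (y : E) :
    φ x + ((⟪-gradient f xb - γ • (x - xb), y - x⟫ - γ / 2 * ‖y - x‖ ^ 2 : ℝ) : EReal) ≤ φ y := by
  have h := EReal.add_coe_sub_le_of_coe_add_le (hx y)
  have hy : y - xb = (y - x) + (x - xb) := by abel
  have key : f xb + ⟪gradient f xb, x - xb⟫ + γ / 2 * ‖x - xb‖ ^ 2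
      - (f xb + ⟪gradient f xb, y - xb⟫ + γ / 2 * ‖y - xb‖ ^ 2)
      = ⟪-gradient f xb - γ • (x - xb), y - x⟫ - γ / 2 * ‖y - x‖ ^ 2 := by
    rw [inner_sub_left (-gradient f xb), inner_neg_left, real_inner_smul_left, hy,
      norm_add_sq_real, inner_add_right, real_inner_comm (x - xb) (y - x)]
    ring
  rwa [key] at h

lemma IsProxMin.mem_frechetSubdiff (hx : IsProxMin f φ xb γ x) :
    -gradient f xb - γ • (x - xb) ∈ FrechetSubdiff φ x :=
  mem_frechetSubdiff_of_forall_add_sub_sq_le hx.add_inner_sub_sq_le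

lemma IsProxMin.ne_top (hx : IsProxMin f φ xb γ x) (hxb : φ xb ≠ ⊤) : φ x ≠ ⊤ := by
  intro hxtop
  have h := hx xb
  simp only [proxObj, hxtop, EReal.coe_add_top] at h
  exact EReal.add_ne_top (EReal.coe_ne_top _) hxb (top_le_iff.1 h)

lemma IsProxMin.inner_add_toReal_le (hx : IsProxMin f φ xb γ x) (hbot : ∀ z, φ z ≠ ⊥)
    (hxb : φ xb ≠ ⊤) :
    ⟪gradient f xb, x - xb⟫ + γ / 2 * ‖x - xb‖ ^ 2 + (φ x).toReal ≤ (φ xb).toReal := by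
  have h := hx xb
  rw [proxObj, proxObj, ← EReal.coe_toReal (hx.ne_top hxb) (hbot x),
    ← EReal.coe_toReal hxb (hbot xb)] at h
  norm_cast at h
  simp only [sub_self, inner_zero_right, norm_zero] at h
  linarith

lemma IsProxMin.one_sub_mul_sq_lt_of_not_accept (hx : IsProxMin f φ xb γ x)
    (hbot : ∀ z, φ z ≠ ⊥) (hxb : φ xb ≠ ⊤) {δ : ℝ}
    (hrej : psi f φ xb < psi f φ x + ((δ * γ / 2 * ‖x - xb‖ ^ 2 : ℝ) : EReal)) :
    (1 - δ) * γ / 2 * ‖x - xb‖ ^ 2 < f x - f xb - ⟪gradient f xb, x - xb⟫ := by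
  have h := hx.inner_add_toReal_le hbot hxb
  rw [psi, psi, ← EReal.coe_toReal (hx.ne_top hxb) (hbot x),
    ← EReal.coe_toReal hxb (hbot xb)] at hrej
  norm_cast at hrej
  linarith

end IsProxMin

section ProxMinSequence

variable {f : E → ℝ} {φ : E → EReal} {xb : E} {ι : Type*} {l : Filter ι} {γ : ι → ℝ}
  {x : ι → E}

lemma tendsto_of_isProxMin (hx : ∀ i, IsProxMin f φ xb (γ i) (x i)) (hγ : Tendsto γ l atTop)
    (haff : AffineBoundedBelow φ) (hxb : φ xb ≠ ⊤) : Tendsto x l (𝓝 xb) := by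
  obtain ⟨a, b, hab⟩ := id haff
  refine tendsto_iff_norm_sub_tendsto_zero.2 <| tendsto_zero_of_mul_sq_le_add
    (hγ.atTop_div_const two_pos) (fun i => norm_nonneg _)
    (C := (φ xb).toReal - b - ⟪a, xb⟫) (L := ‖a + gradient f xb‖) fun i => ?_
  have hprox := (hx i).inner_add_toReal_le haff.ne_bot hxb
  have haffi : ⟪a, x i⟫ + b ≤ (φ (x i)).toReal := by
    rw [← EReal.coe_le_coe_iff, EReal.coe_toReal ((hx i).ne_top hxb) (haff.ne_bot _)]
    exact hab (x i)
  have hsplit : ⟪a, x i⟫ = ⟪a, xb⟫ + ⟪a, x i - xb⟫ := by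
    rw [← inner_add_right, add_sub_cancel]
  have hcs := real_inner_le_norm (-(a + gradient f xb)) (x i - xb)
  rw [norm_neg, inner_neg_left, inner_add_left] at hcs
  linarith

lemma tendsto_phi_of_isProxMin (hx : ∀ i, IsProxMin f φ xb (γ i) (x i)) (hbot : ∀ z, φ z ≠ ⊥)
    (hxb : φ xb ≠ ⊤) (hγ : ∀ i, 0 ≤ γ i) (hlsc : LowerSemicontinuousAt φ xb)
    (hlim : Tendsto x l (𝓝 xb)) : Tendsto (fun i => φ (x i)) l (𝓝 (φ xb)) := by
  have hbound : Tendsto (fun i => (φ xb).toReal + ‖gradient f xb‖ * ‖x i - xb‖) l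
      (𝓝 (φ xb).toReal) := by
    simpa using tendsto_const_nhds.add
      ((tendsto_iff_norm_sub_tendsto_zero.1 hlim).const_mul ‖gradient f xb‖)
  refine hlsc.tendsto_of_eventually_le hlim
    (g := fun i => (((φ xb).toReal + ‖gradient f xb‖ * ‖x i - xb‖ : ℝ) : EReal)) ?_
    (.of_forall fun i => ?_)
  · rw [← EReal.coe_toReal hxb (hbot xb)]
    exact EReal.tendsto_coe.2 hbound
  · rw [← EReal.coe_toReal ((hx i).ne_top hxb) (hbot _), EReal.coe_le_coe_iff]
    have hprox := (hx i).inner_add_toReal_le hbot hxb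
    have hcs := real_inner_le_norm (-gradient f xb) (x i - xb)
    rw [norm_neg, inner_neg_left] at hcs
    nlinarith [mul_nonneg (hγ i) (sq_nonneg ‖x i - xb‖)]

lemma tendsto_smul_sub_of_not_accept (hf : DifferentiableAt ℝ f xb)
    (hx : ∀ i, IsProxMin f φ xb (γ i) (x i)) (hbot : ∀ z, φ z ≠ ⊥) (hxb : φ xb ≠ ⊤)
    (hγ : ∀ i, 0 ≤ γ i) {δ : ℝ} (hδ : δ < 1) (hlim : Tendsto x l (𝓝 xb))
    (hrej : ∀ i, psi f φ xb < psi f φ (x i) + ((δ * γ i / 2 * ‖x i - xb‖ ^ 2 : ℝ) : EReal)) :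
    Tendsto (fun i => γ i • (x i - xb)) l (𝓝 0) :=
  tendsto_smul_zero_of_isLittleO (by linarith : 0 < (1 - δ) / 2) hγ
    ((hasGradientAt_iff_isLittleO.1 hf.hasGradientAt).comp_tendsto hlim) fun i => by
      have := (hx i).one_sub_mul_sq_lt_of_not_accept hbot hxb (hrej i)
      simp only [Function.comp_apply]
      linarith

end ProxMinSequence

theorem stmt_0_general
    (f : E → ℝ) (φ : E → EReal) (hf : ContDiff ℝ 1 f)
    (hlsc : LowerSemicontinuous φ) (haff : AffineBoundedBelow φ)
    (xb : E) (hdom : φ xb ≠ ⊤) (hstat : ¬ MStationary f φ xb)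
    (τ γ0 δ : ℝ) (hτ : 1 < τ) (hγ0 : 0 < γ0) (hδ : δ ∈ Set.Ioo (0 : ℝ) 1)
    (x : ℕ → E) (hx : ∀ i : ℕ, IsProxMin f φ xb (τ ^ i * γ0) (x i)) :
    ∃ i : ℕ,
      psi f φ (x i) + ((δ * (τ ^ i * γ0) / 2 * ‖x i - xb‖ ^ 2 : ℝ) : EReal) ≤ psi f φ xb := by
  by_contra! hrej
  have hγ : Tendsto (fun i : ℕ => τ ^ i * γ0) atTop atTop :=
    (tendsto_pow_atTop_atTop_of_one_lt hτ).atTop_mul_const hγ0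
  have hγ_nonneg : ∀ i : ℕ, 0 ≤ τ ^ i * γ0 := fun i => by positivity
  have hlim : Tendsto x atTop (𝓝 xb) := tendsto_of_isProxMin hx hγ haff hdom
  have hstep := tendsto_smul_sub_of_not_accept (hf.differentiable one_ne_zero xb) hx haff.ne_bot
    hdom hγ_nonneg hδ.2 hlim hrej
  exact hstat ⟨hdom, x, fun i => -gradient f xb - (τ ^ i * γ0) • (x i - xb), hlim,
    tendsto_phi_of_isProxMin hx haff.ne_bot hdom hγ_nonneg (hlsc xb) hlim,
    by simpa using tendsto_const_nhds.sub hstep, fun i => (hx i).mem_frechetSubdiff⟩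

/-- Lemma 3.2: finiteness of the inner loop of the monotone proximal gradient method.
If `xb ∈ dom φ` is not M-stationary, `φ` is bounded below by an affine function,
`τ > 1`, `γ⁰ > 0`, `δ ∈ (0,1)`, and for each `i` the point `x i` is a global minimizer of
the proximal subproblem at `xb` with parameter `γ_i = τ^i γ⁰`, then some `i` satisfies the
acceptance criterion `ψ(x i) ≤ ψ(xb) - δ (γ_i/2) ‖x i - xb‖²`. -/
theorem stmt_0
    (f : E → ℝ) (φ : E → EReal) (hf : ContDiff ℝ 1 f)
    (hbot : ∀ z : E, φ z ≠ ⊥) (hproper : ∃ z : E, φ z ≠ ⊤)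
    (hlsc : LowerSemicontinuous φ) (haff : AffineBoundedBelow φ)
    (xb : E) (hdom : φ xb ≠ ⊤) (hstat : ¬ MStationary f φ xb)
    (τ γ0 δ : ℝ) (hτ : 1 < τ) (hγ0 : 0 < γ0) (hδ : δ ∈ Set.Ioo (0 : ℝ) 1)
    (x : ℕ → E) (hx : ∀ i : ℕ, IsProxMin f φ xb (τ ^ i * γ0) (x i)) :
    ∃ i : ℕ,
      psi f φ (x i) + ((δ * (τ ^ i * γ0) / 2 * ‖x i - xb‖ ^ 2 : ℝ) : EReal) ≤ psi f φ xb :=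
  stmt_0_general f φ hf hlsc haff xb hdom hstat τ γ0 δ hτ hγ0 hδ x hx
end
end

section
/- Suppose φ is bounded below by an affine function. Let x̄ ∈ dom φ, g ∈ 𝕏, and let {γ_i} ⊂ (0, ∞) be a sequence with γ_i → ∞. For each i ∈ ℕ let x^i be a global minimizer of x ↦ ⟨g, x − x̄⟩ + (γ_i/2)‖x − x̄‖² + φ(x) over 𝕏. Then x^i → x̄ and φ(x^i) → φ(x̄) as i → ∞. -/
open Filter Topology RealInnerProductSpace

noncomputable section

variable {E : Type*} [NormedAddCommGroup E] [InnerProductSpace ℝ E] [FiniteDimensional ℝ E]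

/-- If `φ` is proper, lsc and bounded below by an affine function, `xb ∈ dom φ`, `g ∈ E`,
`γ_i > 0` with `γ_i → ∞`, and `x i` globally minimizes
`x ↦ ⟨g, x - xb⟩ + (γ_i/2)‖x - xb‖² + φ(x)`, then `x i → xb` and `φ(x i) → φ(xb)`. -/
theorem stmt_1
    (φ : E → EReal) (hbot : ∀ z : E, φ z ≠ ⊥) (hproper : ∃ z : E, φ z ≠ ⊤)
    (hlsc : LowerSemicontinuous φ) (haff : AffineBoundedBelow φ)
    (xb : E) (hdom : φ xb ≠ ⊤) (g : E)
    (γ : ℕ → ℝ) (hγpos : ∀ i : ℕ, 0 < γ i) (hγ : Tendsto γ atTop atTop)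
    (x : ℕ → E)
    (hx : ∀ i : ℕ, ∀ y : E,
      ((⟪g, x i - xb⟫ + γ i / 2 * ‖x i - xb‖ ^ 2 : ℝ) : EReal) + φ (x i) ≤
      ((⟪g, y - xb⟫ + γ i / 2 * ‖y - xb‖ ^ 2 : ℝ) : EReal) + φ y) :
    Tendsto x atTop (𝓝 xb) ∧ Tendsto (fun i => φ (x i)) atTop (𝓝 (φ xb)) := by
  obtain ⟨a, b, hab⟩ := haff
  set P : ℝ := (φ xb).toReal with hPdef
  have hPb : φ xb = (P : EReal) := (EReal.coe_toReal hdom (hbot xb)).symm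
  have key : ∀ i, ((⟪g, x i - xb⟫ + γ i / 2 * ‖x i - xb‖ ^ 2 : ℝ) : EReal) + φ (x i)
      ≤ (P : EReal) := by
    intro i
    have h := hx i xb
    simp only [sub_self, inner_zero_right, norm_zero, mul_zero, add_zero, zero_add,
      ne_eq, OfNat.ofNat_ne_zero, not_false_eq_true, zero_pow, EReal.coe_zero, hPb] at h
    exact h
  have hne : ∀ i, φ (x i) ≠ ⊤ := by
    intro i h
    have hk := key i
    rw [h] at hk
    rw [EReal.add_top_of_ne_bot (EReal.coe_ne_bot _)] at hk
    exact (EReal.coe_ne_top P) (top_le_iff.mp hk)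
  set p : ℕ → ℝ := fun i => (φ (x i)).toReal with hpdef
  have hpi : ∀ i, φ (x i) = (p i : EReal) := fun i => (EReal.coe_toReal (hne i) (hbot _)).symm
  have hkey : ∀ i, ⟪g, x i - xb⟫ + γ i / 2 * ‖x i - xb‖ ^ 2 + p i ≤ P := by
    intro i
    have h := key i
    rw [hpi i, ← EReal.coe_add] at h
    exact_mod_cast h
  have hlow : ∀ i, ⟪a, x i⟫ + b ≤ p i := by
    intro i
    have h := hab (x i)
    rw [hpi i] at h
    exact_mod_cast h
  set d : ℕ → ℝ := fun i => ‖x i - xb‖ with hddef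
  set K : ℝ := ‖g + a‖ with hKdef
  set C : ℝ := max (P - b - ⟪a, xb⟫) 0 with hCdef
  have hK0 : 0 ≤ K := norm_nonneg _
  have hC0 : 0 ≤ C := le_max_right _ _
  have hd0 : ∀ i, 0 ≤ d i := fun i => norm_nonneg _
  have hmain : ∀ i, γ i / 2 * (d i) ^ 2 ≤ C + K * d i := by
    intro i
    have h1 := hkey i
    have h2 := hlow i
    have h3 : ⟪g + a, x i - xb⟫ = ⟪g, x i - xb⟫ + (⟪a, x i⟫ - ⟪a, xb⟫) := by
      simp [inner_add_left, inner_sub_right]; ring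
    have h4 : |⟪g + a, x i - xb⟫| ≤ K * d i := abs_real_inner_le_norm _ _
    have h5 : P - b - ⟪a, xb⟫ ≤ C := le_max_left _ _
    have h6 := (abs_le.mp h4).1
    linarith
  have hγ1 : ∀ᶠ i in atTop, 1 ≤ γ i := hγ.eventually_ge_atTop 1
  have hsq : ∀ᶠ i in atTop, (d i) ^ 2 ≤ (4 * C + 4 * K ^ 2) / γ i := by
    filter_upwards [hγ1] with i h1
    rw [le_div_iff₀ (hγpos i)]
    nlinarith [hmain i, sq_nonneg (γ i * d i - 2 * K), hd0 i, hγpos i,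
      mul_le_mul_of_nonneg_left (hmain i) (le_of_lt (hγpos i))]
  have hlim : Tendsto (fun i => (4 * C + 4 * K ^ 2) / γ i) atTop (𝓝 0) :=
    Tendsto.div_atTop tendsto_const_nhds hγ
  have hd2 : Tendsto (fun i => (d i) ^ 2) atTop (𝓝 0) :=
    squeeze_zero' (Eventually.of_forall fun i => sq_nonneg _) hsq hlim
  have hdt : Tendsto d atTop (𝓝 0) := by
    have h := (Real.continuous_sqrt.tendsto 0).comp hd2
    have h2 : (Real.sqrt ∘ fun i => (d i) ^ 2) = d := funext fun i => Real.sqrt_sq (hd0 i)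
    rw [h2, Real.sqrt_zero] at h
    exact h
  have hxt : Tendsto x atTop (𝓝 xb) := by
    rw [tendsto_iff_norm_sub_tendsto_zero]
    exact hdt
  have hup : ∀ i, p i ≤ P + ‖g‖ * d i := by
    intro i
    have h1 := hkey i
    have h4 := (abs_le.mp (abs_real_inner_le_norm g (x i - xb))).1
    have h5 : 0 ≤ γ i / 2 * (d i) ^ 2 := mul_nonneg (div_nonneg (hγpos i).le (by norm_num)) (sq_nonneg _)
    linarith
  refine ⟨hxt, ?_⟩
  rw [tendsto_order]
  constructor
  · intro c hc
    exact hxt.eventually (hlsc xb c hc)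
  · intro c hc
    have hq : Tendsto (fun i => ((P + ‖g‖ * d i : ℝ) : EReal)) atTop (𝓝 (φ xb)) := by
      rw [hPb]
      have hr : Tendsto (fun i => P + ‖g‖ * d i) atTop (𝓝 P) := by
        have hm := hdt.const_mul ‖g‖
        simpa using tendsto_const_nhds.add hm
      exact (continuous_coe_real_ereal.tendsto P).comp hr
    filter_upwards [hq.eventually_lt_const hc] with i hi
    calc φ (x i) = (p i : EReal) := hpi i
      _ ≤ ((P + ‖g‖ * d i : ℝ) : EReal) := EReal.coe_le_coe_iff.mpr (hup i)
      _ < c := hi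
end
end

section
/- Suppose φ is bounded below by an affine function and x̄ ∈ dom φ is not M-stationary. Let {γ_i} ⊂ (0, ∞) satisfy γ_i → ∞, and for each i ∈ ℕ let x^i be a global minimizer of the proximal subproblem at x̄ with parameter γ_i. Then liminf_{i→∞} γ_i ‖x^i − x̄‖ > 0. -/
open Filter Topology RealInnerProductSpace

noncomputable section

variable {E : Type*} [NormedAddCommGroup E] [InnerProductSpace ℝ E] [FiniteDimensional ℝ E]

section AuxLemmas
variable {E : Type*} [NormedAddCommGroup E] [InnerProductSpace ℝ E] [FiniteDimensional ℝ E]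

lemma aux_dom' {f : E → ℝ} {φ : E → EReal} {xb : E} {γ : ℝ} {x : E}
    (hx : IsProxMin f φ xb γ x) (hdom : φ xb ≠ ⊤) (hbot : φ xb ≠ ⊥) : φ x ≠ ⊤ := by
  intro h
  have h2 := hx xb
  rw [proxObj, proxObj, h, EReal.coe_add_top, top_le_iff] at h2
  rw [← EReal.coe_toReal hdom hbot, ← EReal.coe_add] at h2
  exact EReal.coe_ne_top _ h2

/-- real version of minimality, both points in the domain -/
lemma aux_real' {f : E → ℝ} {φ : E → EReal} {xb : E} {γ : ℝ} {x y : E}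
    (hx : IsProxMin f φ xb γ x) (hxt : φ x ≠ ⊤) (hxb : φ x ≠ ⊥)
    (hyt : φ y ≠ ⊤) (hyb : φ y ≠ ⊥) :
    f xb + ⟪gradient f xb, x - xb⟫ + γ / 2 * ‖x - xb‖ ^ 2 + (φ x).toReal ≤
    f xb + ⟪gradient f xb, y - xb⟫ + γ / 2 * ‖y - xb‖ ^ 2 + (φ y).toReal := by
  have h2 := hx y
  rw [proxObj, proxObj, ← EReal.coe_toReal hxt hxb, ← EReal.coe_toReal hyt hyb,
    ← EReal.coe_add, ← EReal.coe_add, EReal.coe_le_coe_iff] at h2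
  exact h2

lemma aux_key' {f : E → ℝ} {φ : E → EReal} {xb : E} {γ : ℝ} {x y : E}
    (hx : IsProxMin f φ xb γ x) (hxt : φ x ≠ ⊤) (hxb : φ x ≠ ⊥)
    (hyt : φ y ≠ ⊤) (hyb : φ y ≠ ⊥) :
    (φ x).toReal + ⟪-gradient f xb - γ • (x - xb), y - x⟫ ≤
      (φ y).toReal + γ / 2 * ‖y - x‖ ^ 2 := by
  have h2 := aux_real' hx hxt hxb hyt hyb
  have hexp : ‖y - xb‖ ^ 2 = ‖y - x‖ ^ 2 + 2 * ⟪y - x, x - xb⟫ + ‖x - xb‖ ^ 2 := by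
    have : y - xb = (y - x) + (x - xb) := by abel
    rw [this, @norm_add_sq_real]
  have hinner : ⟪gradient f xb, y - xb⟫ = ⟪gradient f xb, y - x⟫ + ⟪gradient f xb, x - xb⟫ := by
    have : y - xb = (y - x) + (x - xb) := by abel
    rw [this, inner_add_right]
  have hv : ⟪-gradient f xb - γ • (x - xb), y - x⟫
      = -⟪gradient f xb, y - x⟫ - γ * ⟪x - xb, y - x⟫ := by
    rw [inner_sub_left, inner_neg_left, real_inner_smul_left]
  rw [real_inner_comm (x - xb) (y - x)] at hexp
  rw [hexp, hinner] at h2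
  rw [hv]
  ring_nf at h2 ⊢
  linarith [h2]

lemma aux_frechet' {f : E → ℝ} {φ : E → EReal} {xb : E} {γ : ℝ} {x : E}
    (hγ : 0 < γ) (hx : IsProxMin f φ xb γ x) (hxt : φ x ≠ ⊤) (hbot : ∀ z, φ z ≠ ⊥) :
    -gradient f xb - γ • (x - xb) ∈ FrechetSubdiff φ x := by
  intro ε hε
  have hball : ∀ᶠ y in 𝓝[≠] x, ‖y - x‖ ≤ 2 * ε / γ := by
    apply eventually_nhdsWithin_of_eventually_nhds
    have hmem : Metric.closedBall x (2 * ε / γ) ∈ 𝓝 x :=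
      Metric.closedBall_mem_nhds x (by positivity)
    filter_upwards [hmem] with y hy
    rw [Metric.mem_closedBall, dist_eq_norm] at hy
    exact hy
  filter_upwards [hball] with y hy
  by_cases hyt : φ y = ⊤
  · rw [hyt]; exact le_top
  · have key := aux_key' hx hxt (hbot x) hyt (hbot y)
    rw [← EReal.coe_toReal hxt (hbot x), ← EReal.coe_toReal hyt (hbot y),
      ← EReal.coe_add, EReal.coe_le_coe_iff]
    have hq : γ / 2 * ‖y - x‖ ^ 2 ≤ ε * ‖y - x‖ := by
      have h1 : ‖y - x‖ * γ ≤ 2 * ε := (le_div_iff₀ hγ).1 hy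
      nlinarith [mul_le_mul_of_nonneg_left h1 (norm_nonneg (y - x))]
    linarith [key, hq]

lemma aux_ub' {f : E → ℝ} {φ : E → EReal} {xb : E} {γ : ℝ} {x : E}
    (hγ : 0 ≤ γ) (hx : IsProxMin f φ xb γ x) (hxt : φ x ≠ ⊤) (hxb : φ x ≠ ⊥)
    (hbt : φ xb ≠ ⊤) (hbb : φ xb ≠ ⊥) :
    (φ x).toReal ≤ (φ xb).toReal + ‖gradient f xb‖ * ‖x - xb‖ := by
  have h2 := aux_real' hx hxt hxb hbt hbb
  simp only [sub_self, inner_zero_right, norm_zero] at h2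
  have hi : |⟪gradient f xb, x - xb⟫| ≤ ‖gradient f xb‖ * ‖x - xb‖ :=
    abs_real_inner_le_norm _ _
  have h3 : 0 ≤ γ / 2 * ‖x - xb‖ ^ 2 := by positivity
  have h4 := abs_le.mp hi
  linarith [h4.1, h4.2, h2, h3]

end AuxLemmas

/-- If `φ` is bounded below by an affine function, `xb ∈ dom φ` is not M-stationary,
`γ_i > 0` with `γ_i → ∞`, and `x i` globally minimizes the proximal subproblem at `xb`
with parameter `γ_i`, then `liminf_i γ_i ‖x i - xb‖ > 0`. -/

theorem stmt_2
    (f : E → ℝ) (φ : E → EReal) (hf : ContDiff ℝ 1 f)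
    (hbot : ∀ z : E, φ z ≠ ⊥) (hproper : ∃ z : E, φ z ≠ ⊤)
    (hlsc : LowerSemicontinuous φ) (haff : AffineBoundedBelow φ)
    (xb : E) (hdom : φ xb ≠ ⊤) (hstat : ¬ MStationary f φ xb)
    (γ : ℕ → ℝ) (hγpos : ∀ i : ℕ, 0 < γ i) (hγ : Tendsto γ atTop atTop)
    (x : ℕ → E) (hx : ∀ i : ℕ, IsProxMin f φ xb (γ i) (x i)) :
    0 < Filter.liminf (fun i => ((γ i * ‖x i - xb‖ : ℝ) : EReal)) atTop := by
  by_contra hc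
  rw [not_lt] at hc
  have hfreq : ∀ n : ℕ, ∃ᶠ i in atTop, γ i * ‖x i - xb‖ < 1 / (n + 1) := by
    intro n
    by_contra hcon
    rw [not_frequently] at hcon
    have hev : ∀ᶠ i in atTop,
        ((1 / ((n : ℝ) + 1) : ℝ) : EReal) ≤ ((γ i * ‖x i - xb‖ : ℝ) : EReal) := by
      filter_upwards [hcon] with i hi
      exact EReal.coe_le_coe_iff.2 (not_lt.1 hi)
    have hle := Filter.le_liminf_of_le (by isBoundedDefault) hev
    have hpos : (0 : EReal) < ((1 / ((n : ℝ) + 1) : ℝ) : EReal) := by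
      exact_mod_cast (by positivity : (0 : ℝ) < 1 / ((n : ℝ) + 1))
    exact absurd (hpos.trans_le hle) (not_lt.2 hc)
  obtain ⟨σ, hσmono, hσ⟩ := Filter.extraction_forall_of_frequently hfreq
  have hh0 : Tendsto (fun n => γ (σ n) * ‖x (σ n) - xb‖) atTop (𝓝 0) := by
    apply squeeze_zero (fun n => mul_nonneg (hγpos _).le (norm_nonneg _))
      (fun n => (hσ n).le)
    exact tendsto_one_div_add_atTop_nhds_zero_nat
  have hγσ : Tendsto (fun n => γ (σ n)) atTop atTop := hγ.comp hσmono.tendsto_atTop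
  have hd0 : Tendsto (fun n => ‖x (σ n) - xb‖) atTop (𝓝 0) := by
    apply squeeze_zero' (Eventually.of_forall fun n => norm_nonneg _) _ hh0
    filter_upwards [hγσ.eventually_ge_atTop 1] with n hn
    calc ‖x (σ n) - xb‖ = 1 * ‖x (σ n) - xb‖ := (one_mul _).symm
      _ ≤ γ (σ n) * ‖x (σ n) - xb‖ := by
          exact mul_le_mul_of_nonneg_right hn (norm_nonneg _)
  have hutend : Tendsto (fun n => x (σ n)) atTop (𝓝 xb) := by
    rw [tendsto_iff_norm_sub_tendsto_zero]
    exact hd0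
  have hunt : ∀ n, φ (x (σ n)) ≠ ⊤ := fun n => aux_dom' (hx (σ n)) hdom (hbot xb)
  have hvt : Tendsto (fun n => -gradient f xb - γ (σ n) • (x (σ n) - xb)) atTop
      (𝓝 (-gradient f xb)) := by
    rw [tendsto_iff_norm_sub_tendsto_zero]
    have heq : ∀ n, ‖-gradient f xb - γ (σ n) • (x (σ n) - xb) - -gradient f xb‖
        = γ (σ n) * ‖x (σ n) - xb‖ := by
      intro n
      have : -gradient f xb - γ (σ n) • (x (σ n) - xb) - -gradient f xb
          = -(γ (σ n) • (x (σ n) - xb)) := by abel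
      rw [this, norm_neg, norm_smul, Real.norm_eq_abs, abs_of_pos (hγpos _)]
    simp only [heq]
    exact hh0
  have hφtend : Tendsto (fun n => φ (x (σ n))) atTop (𝓝 (φ xb)) := by
    rw [tendsto_order]
    constructor
    · intro a ha
      exact hutend.eventually (hlsc xb a ha)
    · intro b hb
      rcases eq_or_ne b ⊤ with rfl | hbt
      · exact Eventually.of_forall fun n => lt_top_iff_ne_top.2 (hunt n)
      · have hbb : b ≠ ⊥ := fun h => by
          rw [h] at hb; exact absurd hb (by simp)
        have hbr : (φ xb).toReal < b.toReal := by
          rw [← EReal.coe_lt_coe_iff, EReal.coe_toReal hdom (hbot xb),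
            EReal.coe_toReal hbt hbb]
          exact hb
        have htc : Tendsto (fun n => (φ xb).toReal + ‖gradient f xb‖ * ‖x (σ n) - xb‖)
            atTop (𝓝 ((φ xb).toReal)) := by
          have := (hd0.const_mul ‖gradient f xb‖)
          have h2 := tendsto_const_nhds (x := (φ xb).toReal) (f := atTop (α := ℕ)) |>.add this
          simpa using h2
        filter_upwards [htc.eventually_lt_const hbr] with n hn
        calc φ (x (σ n)) ≤ (((φ xb).toReal + ‖gradient f xb‖ * ‖x (σ n) - xb‖ : ℝ) : EReal) := by
              rw [← EReal.coe_toReal (hunt n) (hbot _)]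
              exact EReal.coe_le_coe_iff.2
                (aux_ub' (hγpos _).le (hx (σ n)) (hunt n) (hbot _) hdom (hbot xb))
          _ < b := by
              rw [← EReal.coe_toReal hbt hbb]
              exact EReal.coe_lt_coe_iff.2 hn
  exact hstat ⟨hdom, fun n => x (σ n), fun n => -gradient f xb - γ (σ n) • (x (σ n) - xb),
    hutend, hφtend, hvt, fun n => aux_frechet' (hγpos (σ n)) (hx (σ n)) (hunt n) hbot⟩
end
end

section
/- Under Assumption A, each sequence {x^k} generated by the monotone proximal gradient method satisfies ‖x^{k+1} − x^k‖ → 0 as k → ∞. (Proposition 3.3.) -/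
open Filter Topology RealInnerProductSpace

noncomputable section

variable {E : Type*} [NormedAddCommGroup E] [InnerProductSpace ℝ E] [FiniteDimensional ℝ E]

/-- Proposition 3.3: under Assumption A, each sequence generated by the monotone proximal
gradient method satisfies `‖x^{k+1} - x^k‖ → 0`. -/
theorem stmt_4
    (f : E → ℝ) (φ : E → EReal) (hf : ContDiff ℝ 1 f)
    (hbot : ∀ z : E, φ z ≠ ⊥) (hlsc : LowerSemicontinuous φ)
    (τ γmin γmax δ : ℝ) (hτ : 1 < τ) (hγmin : 0 < γmin) (hγmm : γmin ≤ γmax)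
    (hδ : δ ∈ Set.Ioo (0 : ℝ) 1)
    (x : ℕ → E) (γ : ℕ → ℝ)
    (hpsibdd : PsiBddBelow f φ) (haff : AffineBoundedBelow φ)
    (hM : MonoPG f φ τ γmin γmax δ x γ) :
    Tendsto (fun k => ‖x (k + 1) - x k‖) atTop (𝓝 0) := by

  obtain ⟨c, hc⟩ := hpsibdd
  set s : ℕ → ℝ := fun k => f (x k) + (φ (x k)).toReal with hs
  have hpsik : ∀ k, psi f φ (x k) = ((s k : ℝ) : EReal) := by
    intro k
    simp only [psi, hs, EReal.coe_add]
    congr 1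
    exact (EReal.coe_toReal (hM.dom k) (hbot _)).symm
  have hγ : ∀ k, γmin ≤ γ k := by
    intro k
    obtain ⟨γ0, i, ⟨hγ0l, hγ0u⟩, hγk, _⟩ := hM.stepsize k
    have h1 : (1:ℝ) ≤ τ ^ i := one_le_pow₀ hτ.le
    calc γmin ≤ γ0 := hγ0l
      _ = 1 * γ0 := (one_mul _).symm
      _ ≤ τ ^ i * γ0 := by
          apply mul_le_mul_of_nonneg_right h1 (le_trans hγmin.le hγ0l)
      _ = γ k := hγk.symm
  have haccept : ∀ k, s (k+1) + δ * γ k / 2 * ‖x (k+1) - x k‖ ^ 2 ≤ s k := by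
    intro k
    have := hM.accept k
    rw [hpsik, hpsik, ← EReal.coe_add, EReal.coe_le_coe_iff] at this
    exact this
  have hnn : ∀ k, 0 ≤ δ * γ k / 2 * ‖x (k+1) - x k‖ ^ 2 := by
    intro k
    have h1 : 0 < γ k := lt_of_lt_of_le hγmin (hγ k)
    have h2 := hδ.1
    have h3 : (0:ℝ) ≤ ‖x (k+1) - x k‖ ^ 2 := by positivity
    exact mul_nonneg (div_nonneg (mul_nonneg h2.le h1.le) (by norm_num)) h3
  have hanti : Antitone s := by
    apply antitone_nat_of_succ_le
    intro k
    calc s (k+1) ≤ s (k+1) + δ * γ k / 2 * ‖x (k+1) - x k‖ ^ 2 :=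
          le_add_of_nonneg_right (hnn k)
      _ ≤ s k := haccept k
  have hbdd : ∀ k, c ≤ s k := by
    intro k
    have := hc (x k) (hM.dom k)
    rw [hpsik k, EReal.coe_le_coe_iff] at this
    exact this
  have hconv : ∃ L, Tendsto s atTop (𝓝 L) := by
    refine ⟨⨅ k, s k, tendsto_atTop_ciInf hanti ⟨c, ?_⟩⟩
    rintro _ ⟨k, rfl⟩; exact hbdd k
  obtain ⟨L, hL⟩ := hconv
  have hdiff : Tendsto (fun k => s k - s (k+1)) atTop (𝓝 0) := by
    have := hL.sub (hL.comp (tendsto_add_atTop_nat 1))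
    simpa using this
  have hsq : Tendsto (fun k => ‖x (k+1) - x k‖ ^ 2) atTop (𝓝 0) := by
    have hpos : 0 < δ * γmin / 2 := by
      have := hδ.1; positivity
    have hub : ∀ k, ‖x (k+1) - x k‖ ^ 2 ≤ (2 / (δ * γmin)) * (s k - s (k+1)) := by
      intro k
      have h1 : δ * γmin / 2 * ‖x (k+1) - x k‖ ^ 2 ≤ s k - s (k+1) := by
        have h2 : δ * γmin / 2 * ‖x (k+1) - x k‖ ^ 2
            ≤ δ * γ k / 2 * ‖x (k+1) - x k‖ ^ 2 := by
          apply mul_le_mul_of_nonneg_right _ (by positivity)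
          have := hγ k
          have := hδ.1
          nlinarith
        nlinarith [haccept k]
      have h3 : 0 < δ * γmin := by have := hδ.1; positivity
      calc ‖x (k+1) - x k‖ ^ 2 = (2 / (δ * γmin)) * (δ * γmin / 2 * ‖x (k+1) - x k‖ ^ 2) := by
            rw [← mul_assoc, div_mul_div_comm, mul_comm (δ * γmin) 2, div_self (mul_ne_zero two_ne_zero h3.ne'), one_mul]
        _ ≤ (2 / (δ * γmin)) * (s k - s (k+1)) := by
            apply mul_le_mul_of_nonneg_left h1 (by positivity)
    have hlb : ∀ k, (0:ℝ) ≤ ‖x (k+1) - x k‖ ^ 2 := fun k => by positivity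
    have htop : Tendsto (fun k => (2 / (δ * γmin)) * (s k - s (k+1))) atTop (𝓝 0) := by
      have := hdiff.const_mul (2 / (δ * γmin))
      simpa using this
    exact squeeze_zero hlb hub htop
  have := hsq.sqrt
  simpa [Real.sqrt_sq (norm_nonneg _)] using this
end
end

section
/- Under Assumption A, let {x^k} with parameters {γ_k} be generated by the monotone proximal gradient method, and let {x^k}_{k∈K} be a subsequence converging to some point x*. Then γ_k ‖x^{k+1} − x^k‖ → 0 along k ∈ K. (Proposition 3.4.) -/
open Filter Topology RealInnerProductSpace

noncomputable section

variable {E : Type*} [NormedAddCommGroup E] [InnerProductSpace ℝ E] [FiniteDimensional ℝ E]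

/-! The objective values `ψ(x^k)` decrease by at least `δ γ_k/2 ‖x^{k+1} - x^k‖²` and are bounded
below, so `γ_k ‖x^{k+1} - x^k‖² → 0`. Hence `γ_k ‖x^{k+1} - x^k‖` can stay away from `0` only
along indices where `γ_k → ∞`; there the stepsize was enlarged, so the trial point `x̂^k` for
`γ_k / τ` failed the descent test. Comparing the two proximal problems gives
`‖x^{k+1} - x^k‖ ≤ ‖x̂^k - x^k‖`. The affine minorant of `φ` forces `x̂^k - x^k → 0`, and then the
failed descent test bounds `(1 - δ) γ_k / (2τ) ‖x̂^k - x^k‖²` by the first-order Taylor remainder of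
`f`, which is `o(‖x̂^k - x^k‖)` by strict differentiability. -/

section RealSequences

variable {ι : Type*} {l : Filter ι}

theorem tendsto_zero_of_add_le_of_bddBelow {s c : ℕ → ℝ} (hc : ∀ k, 0 ≤ c k)
    (h : ∀ k, s (k + 1) + c k ≤ s k) (hs : BddBelow (Set.range s)) :
    Tendsto c atTop (𝓝 0) := by
  have hlim := tendsto_atTop_ciInf (antitone_nat_of_succ_le fun k => by linarith [hc k, h k]) hs
  have hdiff : Tendsto (fun k => s k - s (k + 1)) atTop (𝓝 0) := by
    simpa using hlim.sub (hlim.comp (tendsto_add_atTop_nat 1))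
  exact squeeze_zero hc (fun k => by linarith [h k]) hdiff

theorem tendsto_zero_of_mul_sq_le_add_mul {t r : ι → ℝ} {B G : ℝ} (ht : Tendsto t l atTop)
    (hr : ∀ i, 0 ≤ r i) (h : ∀ᶠ i in l, t i * r i ^ 2 ≤ B + G * r i) :
    Tendsto r l (𝓝 0) := by
  refine tendsto_order.2 ⟨fun a ha => Eventually.of_forall fun i => ha.trans_le (hr i),
    fun ρ hρ => ?_⟩
  filter_upwards [h, ht.eventually_gt_atTop ((|B| / ρ + |G|) / ρ)] with i hi hti
  by_contra! hρr
  have hK : |B| / ρ + |G| < t i * ρ := (div_lt_iff₀ hρ).1 hti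
  have hB : B ≤ |B| / ρ * r i := by
    calc B ≤ |B| := le_abs_self B
      _ ≤ |B| / ρ * r i := by rw [div_mul_eq_mul_div, le_div_iff₀ hρ]; gcongr
  have hr0 : 0 < r i := hρ.trans_le hρr
  have ht0 : 0 ≤ t i := le_trans (by positivity) hti.le
  have h1 : (|B| / ρ + |G|) * r i < t i * ρ * r i := mul_lt_mul_of_pos_right hK hr0
  have h2 : t i * ρ * r i ≤ t i * r i ^ 2 := by nlinarith [mul_le_mul_of_nonneg_left hρr ht0]
  have h3 : G * r i ≤ |G| * r i := mul_le_mul_of_nonneg_right (le_abs_self G) hr0.le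
  linarith

theorem tendsto_mul_of_mul_sq_le_isLittleO {t r e : ι → ℝ} (ht : ∀ᶠ i in l, 0 ≤ t i)
    (hr : ∀ i, 0 ≤ r i) (he : e =o[l] r) (h : ∀ᶠ i in l, t i * r i ^ 2 ≤ e i) :
    Tendsto (fun i => t i * r i) l (𝓝 0) := by
  refine tendsto_order.2 ⟨fun a ha => ht.mono fun i hi => ha.trans_le (mul_nonneg hi (hr i)),
    fun ε hε => ?_⟩
  filter_upwards [h, he.bound (half_pos hε)] with i hi hei
  rcases (hr i).eq_or_lt with hri | hri
  · simpa [← hri] using hε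
  rw [Real.norm_of_nonneg (hr i)] at hei
  have hle : t i * r i * r i ≤ ε / 2 * r i :=
    calc t i * r i * r i = t i * r i ^ 2 := by ring
      _ ≤ e i := hi
      _ ≤ ‖e i‖ := Real.le_norm_self _
      _ ≤ ε / 2 * r i := hei
  linarith [le_of_mul_le_mul_right hle hri]

/-- On the indices where `g r ≥ ε`, the hypothesis `g r² → 0` forces `g → ∞`. -/
theorem tendsto_mul_of_forall_tendsto_atTop {g r : ι → ℝ} (hg : ∀ i, 0 ≤ g i)
    (hr : ∀ i, 0 ≤ r i) (hgr : Tendsto (fun i => g i * r i ^ 2) l (𝓝 0))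
    (h : ∀ l' ≤ l, Tendsto g l' atTop → Tendsto (fun i => g i * r i) l' (𝓝 0)) :
    Tendsto (fun i => g i * r i) l (𝓝 0) := by
  refine tendsto_order.2 ⟨fun a ha => Eventually.of_forall fun i =>
    ha.trans_le (mul_nonneg (hg i) (hr i)), fun ε hε => ?_⟩
  by_contra hnot
  set l' := l ⊓ 𝓟 {i | ε ≤ g i * r i}
  have : l'.NeBot := frequently_iff_neBot.1 <| (not_eventually.1 hnot).mono fun i hi => not_lt.1 hi
  have hbig : ∀ᶠ i in l', ε ≤ g i * r i :=
    eventually_inf_principal.2 (Eventually.of_forall fun _ hi => hi)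
  have hpos : ∀ᶠ i in l', 0 < g i * r i ^ 2 := hbig.mono fun i hi => by
    have := (hg i).lt_of_ne (by rintro h0; simp [← h0] at hi; linarith)
    have := (hr i).lt_of_ne (by rintro h0; simp [← h0] at hi; linarith)
    positivity
  have hg_top : Tendsto g l' atTop := by
    have hsq : Tendsto (fun i => g i * r i ^ 2) l' (𝓝[>] 0) :=
      tendsto_nhdsWithin_iff.2 ⟨hgr.mono_left inf_le_left, hpos⟩
    refine tendsto_atTop_mono' l' ((hbig.and hpos).mono fun i hi => ?_)
      (hsq.inv_tendsto_nhdsGT_zero.const_mul_atTop (pow_pos hε 2))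
    rw [Pi.inv_apply, ← div_eq_mul_inv, div_le_iff₀ hi.2]
    nlinarith [hi.1]
  obtain ⟨i, hi, hi'⟩ := (hbig.and ((h l' inf_le_left hg_top).eventually (gt_mem_nhds hε))).exists
  exact hi.not_gt hi'

end RealSequences

theorem ContDiffAt.isLittleO_sub_sub_fderiv {ι 𝕜 F G : Type*} [RCLike 𝕜] [NormedAddCommGroup F]
    [NormedSpace 𝕜 F] [NormedAddCommGroup G] [NormedSpace 𝕜 G] {f : F → G} {x : F}
    (hf : ContDiffAt 𝕜 1 f x) {l : Filter ι} {u v : ι → F} (hu : Tendsto u l (𝓝 x))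
    (hv : Tendsto v l (𝓝 x)) :
    (fun i => f (v i) - f (u i) - fderiv 𝕜 f (u i) (v i - u i)) =o[l] fun i => v i - u i := by
  have hstrict : (fun i => f (v i) - f (u i) - fderiv 𝕜 f x (v i - u i)) =o[l]
      fun i => v i - u i :=
    (hf.hasStrictFDerivAt one_ne_zero).isLittleO.comp_tendsto (hv.prodMk_nhds hu)
  have hderiv : Tendsto (fun i => fderiv 𝕜 f (u i) - fderiv 𝕜 f x) l (𝓝 0) := by
    simpa using ((hf.continuousAt_fderiv one_ne_zero).tendsto.comp hu).sub_const (fderiv 𝕜 f x)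
  have hlin : (fun i => (fderiv 𝕜 f (u i) - fderiv 𝕜 f x) (v i - u i)) =o[l]
      fun i => v i - u i := by
    refine Asymptotics.isLittleO_iff.2 fun c hc => ?_
    filter_upwards [(hderiv.norm.eventually (gt_mem_nhds (by simpa using hc)))] with i hi
    simpa using ((fderiv 𝕜 f (u i) - fderiv 𝕜 f x).le_opNorm (v i - u i)).trans
      (mul_le_mul_of_nonneg_right (by simpa using hi.le) (norm_nonneg _))
  refine (hstrict.sub hlin).congr_left fun i => ?_
  simp only [sub_apply]
  abel

theorem psi_eq_coe {V : Type*} {f : V → ℝ} {φ : V → EReal} {z : V} (hbot : φ z ≠ ⊥)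
    (htop : φ z ≠ ⊤) : psi f φ z = ((f z + (φ z).toReal : ℝ) : EReal) := by
  rw [psi, EReal.coe_add, EReal.coe_toReal htop hbot]

theorem inner_gradient_eq_fderiv (f : E → ℝ) (x v : E) : ⟪gradient f x, v⟫ = fderiv ℝ f x v := by
  rw [gradient, InnerProductSpace.toDual_symm_apply]

section ProxSubproblem

variable {f : E → ℝ} {φ : E → EReal} {xb w y : E} {c : ℝ}

theorem IsProxMin.ne_top_s6 (h : IsProxMin f φ xb c w) (hy : φ y ≠ ⊤) : φ w ≠ ⊤ := by
  intro hw
  have hle := h y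
  rw [proxObj, proxObj, hw, EReal.coe_add_top, top_le_iff] at hle
  exact EReal.add_ne_top (EReal.coe_ne_top _) hy hle

theorem IsProxMin.toReal_le (hbot : ∀ z, φ z ≠ ⊥) (h : IsProxMin f φ xb c w) (hy : φ y ≠ ⊤) :
    ⟪gradient f xb, w - xb⟫ + c / 2 * ‖w - xb‖ ^ 2 + (φ w).toReal ≤
      ⟪gradient f xb, y - xb⟫ + c / 2 * ‖y - xb‖ ^ 2 + (φ y).toReal := by
  have hle := h y
  rw [proxObj, proxObj, ← EReal.coe_toReal (h.ne_top_s6 hy) (hbot w),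
    ← EReal.coe_toReal hy (hbot y), ← EReal.coe_add, ← EReal.coe_add,
    EReal.coe_le_coe_iff] at hle
  linarith

theorem IsProxMin.toReal_le_self (hbot : ∀ z, φ z ≠ ⊥) (h : IsProxMin f φ xb c w)
    (hxb : φ xb ≠ ⊤) :
    ⟪gradient f xb, w - xb⟫ + c / 2 * ‖w - xb‖ ^ 2 + (φ w).toReal ≤ (φ xb).toReal := by
  simpa using h.toReal_le hbot hxb

theorem IsProxMin.norm_sub_le_of_lt (hbot : ∀ z, φ z ≠ ⊥) (hxb : φ xb ≠ ⊤) {c' : ℝ} {w' : E}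
    (h : IsProxMin f φ xb c w) (h' : IsProxMin f φ xb c' w') (hc : c < c') :
    ‖w' - xb‖ ≤ ‖w - xb‖ := by
  have h₁ := h.toReal_le hbot (h'.ne_top_s6 hxb)
  have h₂ := h'.toReal_le hbot (h.ne_top_s6 hxb)
  by_contra! hlt
  nlinarith [mul_self_lt_mul_self (norm_nonneg _) hlt]

/-- The paper's rejected trial point `x̂^k`, here with `γ` in the role of `γ̂_k = γ_k / τ`. -/
def IsRejectedProxPoint (f : E → ℝ) (φ : E → EReal) (δ : ℝ) (xb : E) (γ : ℝ) (w : E) : Prop :=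
  IsProxMin f φ xb γ w ∧ psi f φ xb < psi f φ w + ((δ * γ / 2 * ‖w - xb‖ ^ 2 : ℝ) : EReal)

theorem IsRejectedProxPoint.mul_sq_lt {δ : ℝ} (hbot : ∀ z, φ z ≠ ⊥) (hxb : φ xb ≠ ⊤)
    (h : IsRejectedProxPoint f φ δ xb c w) :
    (1 - δ) * c / 2 * ‖w - xb‖ ^ 2 < f w - f xb - ⟪gradient f xb, w - xb⟫ := by
  have hmin := h.1.toReal_le_self hbot hxb
  have hfail := h.2
  rw [psi_eq_coe (hbot xb) hxb, psi_eq_coe (hbot w) (h.1.ne_top_s6 hxb), ← EReal.coe_add,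
    EReal.coe_lt_coe_iff] at hfail
  linarith

/-- The affine minorant of `φ` turns the prox inequality into `γ/2 ‖v - u‖² ≤ B + G ‖v - u‖`. -/
theorem tendsto_norm_sub_of_isProxMin {ι : Type*} {l : Filter ι} (hbot : ∀ z, φ z ≠ ⊥)
    (haff : AffineBoundedBelow φ) {xs : E} (hg : ContinuousAt (gradient f) xs) {u v : ι → E}
    {γ : ι → ℝ} (hu : Tendsto u l (𝓝 xs)) (hdom : ∀ᶠ i in l, φ (u i) ≠ ⊤)
    (hφ : IsBoundedUnder (· ≤ ·) l fun i => (φ (u i)).toReal) (hγ : Tendsto γ l atTop)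
    (hv : ∀ᶠ i in l, IsProxMin f φ (u i) (γ i) (v i)) :
    Tendsto (fun i => ‖v i - u i‖) l (𝓝 0) := by
  obtain ⟨a, b, hab⟩ := haff
  obtain ⟨B, hB⟩ := hφ
  have hau : Tendsto (fun i => -⟪a, u i⟫) l (𝓝 (-⟪a, xs⟫)) := (tendsto_const_nhds.inner hu).neg
  have hgu : Tendsto (fun i => ‖a + gradient f (u i)‖) l (𝓝 ‖a + gradient f xs‖) :=
    (tendsto_const_nhds.add (hg.tendsto.comp hu)).norm
  obtain ⟨A, hA⟩ := hau.isBoundedUnder_le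
  obtain ⟨G, hG⟩ := hgu.isBoundedUnder_le
  refine tendsto_zero_of_mul_sq_le_add_mul (B := B + A - b) (G := G)
    (hγ.atTop_div_const two_pos) (fun i => norm_nonneg _) ?_
  filter_upwards [hdom, hv, eventually_map.1 hB, eventually_map.1 hA, eventually_map.1 hG]
    with i hdom hv hB hA hG
  have hmin := hv.toReal_le_self hbot hdom
  have hva : ⟪a, v i⟫ + b ≤ (φ (v i)).toReal := by
    have := hab (v i)
    rwa [← EReal.coe_toReal (hv.ne_top_s6 hdom) (hbot (v i)), EReal.coe_le_coe_iff] at this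
  have hcs := neg_le_of_abs_le (abs_real_inner_le_norm (a + gradient f (u i)) (v i - u i))
  have hG' := mul_le_mul_of_nonneg_right hG (norm_nonneg (v i - u i))
  rw [inner_add_left, inner_sub_right] at hcs
  linarith

end ProxSubproblem

namespace MonoPG

variable {f : E → ℝ} {φ : E → EReal} {τ γmin γmax δ : ℝ} {x : ℕ → E} {γ : ℕ → ℝ}

theorem le_gamma (hM : MonoPG f φ τ γmin γmax δ x γ) (hτ : 1 ≤ τ) (hγmin : 0 ≤ γmin) (k : ℕ) :
    γmin ≤ γ k := by
  obtain ⟨γ0, i, hγ0, hγk, -⟩ := hM.stepsize k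
  rw [hγk]
  exact hγ0.1.trans (le_mul_of_one_le_left (hγmin.trans hγ0.1) (one_le_pow₀ hτ))

/-- `γ_k > γmax ≥ γ_k⁰` forces `i_k ≥ 1`. -/
theorem exists_rejected (hM : MonoPG f φ τ γmin γmax δ x γ) :
    ∃ xh : ℕ → E, ∀ k, γmax < γ k → IsRejectedProxPoint f φ δ (x k) (γ k / τ) (xh k) := by
  suffices ∀ k, ∃ w, γmax < γ k → IsRejectedProxPoint f φ δ (x k) (γ k / τ) w by
    choose xh hxh using this
    exact ⟨xh, hxh⟩
  intro k
  obtain ⟨γ0, i, hγ0, hγk, hrej⟩ := hM.stepsize k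
  rcases Nat.eq_zero_or_pos i with rfl | hi
  · exact ⟨x k, fun hlt => absurd (hγk ▸ hlt) (by simpa using hγ0.2)⟩
  · obtain ⟨w, hw⟩ := hrej hi
    exact ⟨w, fun _ => hw⟩

theorem descent (hbot : ∀ z, φ z ≠ ⊥) (hM : MonoPG f φ τ γmin γmax δ x γ) (k : ℕ) :
    f (x (k + 1)) + (φ (x (k + 1))).toReal + δ * γ k / 2 * ‖x (k + 1) - x k‖ ^ 2 ≤
      f (x k) + (φ (x k)).toReal := by
  have h := hM.accept k
  rwa [psi_eq_coe (hbot _) (hM.dom _), psi_eq_coe (hbot _) (hM.dom _), ← EReal.coe_add,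
    EReal.coe_le_coe_iff] at h

theorem antitone_objective (hbot : ∀ z, φ z ≠ ⊥) (hM : MonoPG f φ τ γmin γmax δ x γ)
    (hδ : 0 ≤ δ) (hγ : ∀ k, 0 ≤ γ k) : Antitone fun k => f (x k) + (φ (x k)).toReal :=
  antitone_nat_of_succ_le fun k => by
    have := hM.descent hbot k
    have : 0 ≤ δ * γ k / 2 * ‖x (k + 1) - x k‖ ^ 2 := by have := hγ k; positivity
    linarith

theorem tendsto_gamma_mul_sq (hbot : ∀ z, φ z ≠ ⊥) (hM : MonoPG f φ τ γmin γmax δ x γ)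
    (hδ : 0 < δ) (hγ : ∀ k, 0 ≤ γ k) (hψ : PsiBddBelow f φ) :
    Tendsto (fun k => γ k * ‖x (k + 1) - x k‖ ^ 2) atTop (𝓝 0) := by
  obtain ⟨c, hc⟩ := hψ
  have hbdd : BddBelow (Set.range fun k => f (x k) + (φ (x k)).toReal) := by
    refine ⟨c, ?_⟩
    rintro _ ⟨k, rfl⟩
    have := hc (x k) (hM.dom k)
    rwa [psi_eq_coe (hbot _) (hM.dom k), EReal.coe_le_coe_iff] at this
  have hdec := tendsto_zero_of_add_le_of_bddBelow
    (fun k => by have := hγ k; positivity) (hM.descent hbot) hbdd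
  convert hdec.const_mul (2 / δ) using 2 with k
  · field_simp
  · simp

theorem tendsto_gamma_mul_norm_of_tendsto_atTop (hf : ContDiff ℝ 1 f) (hbot : ∀ z, φ z ≠ ⊥)
    (haff : AffineBoundedBelow φ) (hM : MonoPG f φ τ γmin γmax δ x γ) (hτ : 1 < τ)
    (hδ : δ ∈ Set.Ioo (0 : ℝ) 1) (hγ : ∀ k, 0 < γ k) {l : Filter ℕ} {xs : E}
    (hx : Tendsto x l (𝓝 xs)) (hγl : Tendsto γ l atTop) :
    Tendsto (fun k => γ k * ‖x (k + 1) - x k‖) l (𝓝 0) := by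
  have hτ0 : 0 < τ := one_pos.trans hτ
  obtain ⟨xh, hxh⟩ := hM.exists_rejected
  have hrej : ∀ᶠ k in l, IsRejectedProxPoint f φ δ (x k) (γ k / τ) (xh k) :=
    (hγl.eventually_gt_atTop γmax).mono hxh
  have hφ : IsBoundedUnder (· ≤ ·) l fun k => (φ (x k)).toReal := by
    refine ((tendsto_const_nhds (x := f (x 0) + (φ (x 0)).toReal)).sub
      ((hf.continuous.tendsto xs).comp hx)).isBoundedUnder_le.mono_le
      (Eventually.of_forall fun k => ?_)
    have := hM.antitone_objective hbot hδ.1.le (fun k => (hγ k).le) (Nat.zero_le k)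
    simp only [Function.comp_apply]
    linarith
  have hgrad : Continuous (gradient f) :=
    (InnerProductSpace.toDual ℝ E).symm.continuous.comp (hf.continuous_fderiv one_ne_zero)
  have hstep : Tendsto (fun k => ‖xh k - x k‖) l (𝓝 0) :=
    tendsto_norm_sub_of_isProxMin hbot haff hgrad.continuousAt hx (Eventually.of_forall hM.dom) hφ
      (hγl.atTop_div_const hτ0) (hrej.mono fun k hk => hk.1)
  have hxh : Tendsto xh l (𝓝 xs) := by
    simpa using hx.add (tendsto_zero_iff_norm_tendsto_zero.2 hstep)
  have htaylor := hf.contDiffAt.isLittleO_sub_sub_fderiv hx hxh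
  have hsmall : Tendsto (fun k => (1 - δ) * (γ k / τ) / 2 * ‖xh k - x k‖) l (𝓝 0) := by
    refine tendsto_mul_of_mul_sq_le_isLittleO (Eventually.of_forall fun k => ?_)
      (fun k => norm_nonneg _) htaylor.norm_right (hrej.mono fun k hk => ?_)
    · have := hγ k
      have := hδ.2
      positivity
    · simpa [inner_gradient_eq_fderiv] using (hk.mul_sq_lt hbot (hM.dom k)).le
  refine squeeze_zero' (Eventually.of_forall fun k => mul_nonneg (hγ k).le (norm_nonneg _))
    (hrej.mono fun k hk => ?_) (by simpa using hsmall.const_mul (2 * τ / (1 - δ)))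
  have hle := hk.1.norm_sub_le_of_lt hbot (hM.dom k) (hM.isMin k) (div_lt_self (hγ k) hτ)
  have hδ1 : 0 < 1 - δ := sub_pos.2 hδ.2
  calc γ k * ‖x (k + 1) - x k‖ ≤ γ k * ‖xh k - x k‖ := mul_le_mul_of_nonneg_left hle (hγ k).le
    _ = 2 * τ / (1 - δ) * ((1 - δ) * (γ k / τ) / 2 * ‖xh k - x k‖) := by field_simp

end MonoPG

theorem stmt_6_general
    (f : E → ℝ) (φ : E → EReal) (hf : ContDiff ℝ 1 f)
    (hbot : ∀ z : E, φ z ≠ ⊥)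
    (τ γmin γmax δ : ℝ) (hτ : 1 < τ) (hγmin : 0 < γmin)
    (hδ : δ ∈ Set.Ioo (0 : ℝ) 1)
    (x : ℕ → E) (γ : ℕ → ℝ)
    (hpsibdd : PsiBddBelow f φ) (haff : AffineBoundedBelow φ)
    (hM : MonoPG f φ τ γmin γmax δ x γ)
    (K : ℕ → ℕ) (hK : StrictMono K) (xstar : E)
    (hconv : Tendsto (fun n => x (K n)) atTop (𝓝 xstar)) :
    Tendsto (fun n => γ (K n) * ‖x (K n + 1) - x (K n)‖) atTop (𝓝 0) := by
  have hγ : ∀ k, 0 < γ k := fun k => hγmin.trans_le (hM.le_gamma hτ.le hγmin.le k)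
  have hsq := (hM.tendsto_gamma_mul_sq hbot hδ.1 (fun k => (hγ k).le) hpsibdd).mono_left
    hK.tendsto_atTop
  refine tendsto_map'_iff.1 <| tendsto_mul_of_forall_tendsto_atTop (fun k => (hγ k).le)
    (fun k => norm_nonneg _) hsq fun l hl hγl => ?_
  exact hM.tendsto_gamma_mul_norm_of_tendsto_atTop hf hbot haff hτ hδ hγ
    ((tendsto_map'_iff.2 hconv).mono_left hl) hγl

/-- Proposition 3.4: under Assumption A, if a subsequence `x^k`, `k ∈ K`, of iterates of
the monotone proximal gradient method converges to `xstar`, then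
`γ_k ‖x^{k+1} - x^k‖ → 0` along `k ∈ K`. -/
theorem stmt_6
    (f : E → ℝ) (φ : E → EReal) (hf : ContDiff ℝ 1 f)
    (hbot : ∀ z : E, φ z ≠ ⊥) (hlsc : LowerSemicontinuous φ)
    (τ γmin γmax δ : ℝ) (hτ : 1 < τ) (hγmin : 0 < γmin) (hγmm : γmin ≤ γmax)
    (hδ : δ ∈ Set.Ioo (0 : ℝ) 1)
    (x : ℕ → E) (γ : ℕ → ℝ)
    (hpsibdd : PsiBddBelow f φ) (haff : AffineBoundedBelow φ)
    (hM : MonoPG f φ τ γmin γmax δ x γ)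
    (K : ℕ → ℕ) (hK : StrictMono K) (xstar : E)
    (hconv : Tendsto (fun n => x (K n)) atTop (𝓝 xstar)) :
    Tendsto (fun n => γ (K n) * ‖x (K n + 1) - x (K n)‖) atTop (𝓝 0) :=
  stmt_6_general f φ hf hbot τ γmin γmax δ hτ hγmin hδ x γ hpsibdd haff hM K hK xstar hconv
end
end

section
/- Under Assumption A, let {x^k} with parameters {γ_k} be generated by the monotone proximal gradient method, let {x^k}_{k∈K} be a subsequence converging to some point x*, and suppose γ_k → ∞ along k ∈ K with i_k ≥ 1 for all k ∈ K, so that for each k ∈ K there is a failed trial point x̂^k, i.e., a global minimizer of the proximal subproblem at x^k with parameter γ̂_k := γ_k/τ violating the acceptance criterion. Then ‖x̂^k − x^k‖ → 0 along k ∈ K, and hence x̂^k → x* along k ∈ K. -/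
open Filter Topology RealInnerProductSpace

noncomputable section

variable {E : Type*} [NormedAddCommGroup E] [InnerProductSpace ℝ E] [FiniteDimensional ℝ E]

private theorem quadBound_stmt7 (t a b : ℝ) (ht : 0 ≤ t) (ha : 0 ≤ a) (hb : 0 ≤ b)
    (h : t ^ 2 ≤ a + b * t) : t ≤ b + Real.sqrt a := by
  nlinarith [Real.sq_sqrt ha, Real.sqrt_nonneg a, sq_nonneg (t - Real.sqrt a - b)]

private theorem gradient_continuous_stmt7 {E : Type*} [NormedAddCommGroup E]
    [InnerProductSpace ℝ E] [FiniteDimensional ℝ E] (f : E → ℝ) (hf : ContDiff ℝ 1 f) :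
    Continuous (gradient f) := by
  have h : gradient f = fun x => (InnerProductSpace.toDual ℝ E).symm (fderiv ℝ f x) := rfl
  rw [h]
  exact (InnerProductSpace.toDual ℝ E).symm.continuous.comp (hf.continuous_fderiv one_ne_zero)

/-- Under Assumption A, let a subsequence `x^k`, `k ∈ K`, of iterates of the monotone
proximal gradient method converge to `xstar`, let `γ_k → ∞` along `K`, and for each
`k ∈ K` let `xh^k` be a failed trial point: a global minimizer of the proximal subproblem
at `x^k` with parameter `γ_k/τ` violating the acceptance criterion. Then
`‖xh^k - x^k‖ → 0` and `xh^k → xstar` along `K`. -/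
theorem stmt_7
    (f : E → ℝ) (φ : E → EReal) (hf : ContDiff ℝ 1 f)
    (hbot : ∀ z : E, φ z ≠ ⊥) (hlsc : LowerSemicontinuous φ)
    (τ γmin γmax δ : ℝ) (hτ : 1 < τ) (hγmin : 0 < γmin) (hγmm : γmin ≤ γmax)
    (hδ : δ ∈ Set.Ioo (0 : ℝ) 1)
    (x : ℕ → E) (γ : ℕ → ℝ)
    (hpsibdd : PsiBddBelow f φ) (haff : AffineBoundedBelow φ)
    (hM : MonoPG f φ τ γmin γmax δ x γ)
    (K : ℕ → ℕ) (hK : StrictMono K) (xstar : E)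
    (hconv : Tendsto (fun n => x (K n)) atTop (𝓝 xstar))
    (hγtop : Tendsto (fun n => γ (K n)) atTop atTop)
    (xh : ℕ → E)
    (hmin : ∀ n : ℕ, IsProxMin f φ (x (K n)) (γ (K n) / τ) (xh n))
    (hfail : ∀ n : ℕ, psi f φ (x (K n)) <
      psi f φ (xh n) + ((δ * (γ (K n) / τ) / 2 * ‖xh n - x (K n)‖ ^ 2 : ℝ) : EReal)) :
    Tendsto (fun n => ‖xh n - x (K n)‖) atTop (𝓝 0) ∧
    Tendsto xh atTop (𝓝 xstar) := by
  clear hfail hpsibdd hlsc hK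
  obtain ⟨a, b, haffb⟩ := haff
  have hτ0 : (0:ℝ) < τ := by linarith
  -- positivity of γ
  have hγpos : ∀ k, 0 < γ k := by
    intro k
    obtain ⟨γ0, i, hγ0, hγk, -⟩ := hM.stepsize k
    have : 0 < γ0 := lt_of_lt_of_le hγmin hγ0.1
    rw [hγk]; positivity
  have hγhpos : ∀ n, 0 < γ (K n) / τ := fun n => div_pos (hγpos _) hτ0
  -- real values of φ along the iterates
  set p : ℕ → ℝ := fun k => (φ (x k)).toReal with hp
  have hpk : ∀ k, φ (x k) = ((p k : ℝ) : EReal) := fun k =>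
    (EReal.coe_toReal (hM.dom k) (hbot _)).symm
  -- ψ is monotone decreasing
  have hψmono : ∀ k, psi f φ (x (k + 1)) ≤ psi f φ (x k) := by
    intro k
    refine le_trans ?_ (hM.accept k)
    refine le_add_of_nonneg_right ?_
    have h0 : (0:ℝ) ≤ δ * γ k / 2 * ‖x (k + 1) - x k‖ ^ 2 := by
      have := hγpos k; have := hδ.1; positivity
    exact_mod_cast h0
  have hψ0 : ∀ k, psi f φ (x k) ≤ psi f φ (x 0) := by
    intro k
    induction k with
    | zero => exact le_rfl
    | succ k ih => exact (hψmono k).trans ih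
  -- real form of the ψ bound
  have hψ0r : ∀ k, f (x k) + p k ≤ f (x 0) + p 0 := by
    intro k
    have h := hψ0 k
    simp only [psi, hpk, ← EReal.coe_add, EReal.coe_le_coe_iff] at h
    exact h
  -- notation
  set g : ℕ → E := fun n => gradient f (x (K n)) with hg
  set t : ℕ → ℝ := fun n => ‖xh n - x (K n)‖ with hts
  set D : ℕ → ℝ := fun n => (f (x 0) + p 0) - f (x (K n)) - b - ⟪a, x (K n)⟫ with hD
  set Mn : ℕ → ℝ := fun n => ‖a + g n‖ with hMn
  -- key real inequality from minimality + affine bound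
  have key : ∀ n, γ (K n) / τ / 2 * t n ^ 2 ≤ D n + Mn n * t n := by
    intro n
    have h1 := hmin n (x (K n))
    simp only [proxObj, sub_self, inner_zero_right, norm_zero] at h1
    rw [zero_pow (two_ne_zero), mul_zero, add_zero, add_zero] at h1
    -- φ (xh n) is finite
    have hhtop : φ (xh n) ≠ ⊤ := by
      intro h
      rw [h, EReal.add_top_of_ne_bot (EReal.coe_ne_bot _), hpk (K n)] at h1
      exact absurd (top_le_iff.mp h1) (EReal.coe_ne_top _)
    have hq : φ (xh n) = (((φ (xh n)).toReal : ℝ) : EReal) :=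
      (EReal.coe_toReal hhtop (hbot _)).symm
    set q : ℝ := (φ (xh n)).toReal
    rw [hq, hpk (K n), ← EReal.coe_add, ← EReal.coe_add, EReal.coe_le_coe_iff] at h1
    -- affine lower bound at xh n
    have haf : ⟪a, xh n⟫ + b ≤ q := by
      have := haffb (xh n)
      rw [hq, EReal.coe_le_coe_iff] at this
      exact this
    -- Cauchy–Schwarz
    have habs : -(Mn n * t n) ≤ ⟪a + g n, xh n - x (K n)⟫ :=
      neg_le_of_abs_le (abs_real_inner_le_norm _ _)
    have hin : ⟪a + g n, xh n - x (K n)⟫ = ⟪a, xh n - x (K n)⟫ + ⟪g n, xh n - x (K n)⟫ :=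
      inner_add_left _ _ _
    have hsplit : ⟪a, xh n - x (K n)⟫ = ⟪a, xh n⟫ - ⟪a, x (K n)⟫ := inner_sub_right _ _ _
    have hψb := hψ0r (K n)
    simp only [hD, hts, hg]
    simp only [hts, hg] at habs hin hsplit h1 ⊢
    linarith
  -- derive t n ≤ B n + sqrt (A n)
  set A : ℕ → ℝ := fun n => 2 * max (D n) 0 / (γ (K n) / τ) with hA
  set B : ℕ → ℝ := fun n => 2 * Mn n / (γ (K n) / τ) with hB
  have hbound : ∀ n, t n ≤ B n + Real.sqrt (A n) := by
    intro n
    have hγh := hγhpos n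
    have hMnn : 0 ≤ Mn n := norm_nonneg _
    have htn : 0 ≤ t n := norm_nonneg _
    have hk := key n
    have hDm := le_max_left (D n) 0
    have hAn : A n = 2 * max (D n) 0 / (γ (K n) / τ) := rfl
    have hBn : B n = 2 * Mn n / (γ (K n) / τ) := rfl
    have hA0 : 0 ≤ A n := by rw [hAn]; exact div_nonneg (by positivity) hγh.le
    have hB0 : 0 ≤ B n := by rw [hBn]; exact div_nonneg (by positivity) hγh.le
    have h2 : t n ^ 2 ≤ (2 * max (D n) 0 + 2 * Mn n * t n) / (γ (K n) / τ) := by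
      rw [le_div_iff₀ hγh]
      clear_value p g t D Mn A B
      linarith
    have h3 : t n ^ 2 ≤ A n + B n * t n := by
      rw [hAn, hBn]
      exact h2.trans (le_of_eq (by ring))
    exact quadBound_stmt7 _ _ _ htn hA0 hB0 h3
  -- limits
  have hγhtop : Tendsto (fun n => γ (K n) / τ) atTop atTop := hγtop.atTop_div_const hτ0
  have hinv : Tendsto (fun n => (γ (K n) / τ)⁻¹) atTop (𝓝 0) := hγhtop.inv_tendsto_atTop
  have hfK : Tendsto (fun n => f (x (K n))) atTop (𝓝 (f xstar)) :=
    (hf.continuous.tendsto xstar).comp hconv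
  have hinK : Tendsto (fun n => ⟪a, x (K n)⟫) atTop (𝓝 ⟪a, xstar⟫) :=
    ((continuous_const.inner continuous_id).tendsto xstar).comp hconv
  have hDt : Tendsto D atTop (𝓝 ((f (x 0) + p 0) - f xstar - b - ⟪a, xstar⟫)) :=
    ((tendsto_const_nhds.sub hfK).sub tendsto_const_nhds).sub hinK
  have hMt : Tendsto Mn atTop (𝓝 ‖a + gradient f xstar‖) := by
    have hc : Continuous fun z : E => ‖a + gradient f z‖ :=
      (continuous_const.add (gradient_continuous_stmt7 f hf)).norm
    exact (hc.tendsto xstar).comp hconv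
  have hAt : Tendsto A atTop (𝓝 0) := by
    have h1 : Tendsto (fun n => 2 * max (D n) 0 * (γ (K n) / τ)⁻¹) atTop
        (𝓝 (2 * max ((f (x 0) + p 0) - f xstar - b - ⟪a, xstar⟫) 0 * 0)) :=
      (tendsto_const_nhds.mul (hDt.max tendsto_const_nhds)).mul hinv
    rw [mul_zero] at h1
    refine h1.congr fun n => ?_
    simp only [hA, div_eq_mul_inv]
  have hBt : Tendsto B atTop (𝓝 0) := by
    have h1 : Tendsto (fun n => 2 * Mn n * (γ (K n) / τ)⁻¹) atTop
        (𝓝 (2 * ‖a + gradient f xstar‖ * 0)) :=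
      (tendsto_const_nhds.mul hMt).mul hinv
    rw [mul_zero] at h1
    refine h1.congr fun n => ?_
    simp only [hB, div_eq_mul_inv]
  have hsq : Tendsto (fun n => Real.sqrt (A n)) atTop (𝓝 0) := by
    have := (Real.continuous_sqrt.tendsto 0).comp hAt
    simpa [Function.comp_def] using this
  have hBA : Tendsto (fun n => B n + Real.sqrt (A n)) atTop (𝓝 0) := by
    have := hBt.add hsq
    simpa using this
  have ht0 : Tendsto t atTop (𝓝 0) :=
    squeeze_zero (fun n => norm_nonneg _) hbound hBA
  refine ⟨ht0, ?_⟩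
  have hdz : Tendsto (fun n => xh n - x (K n)) atTop (𝓝 0) :=
    tendsto_zero_iff_norm_tendsto_zero.mpr ht0
  have : Tendsto (fun n => (xh n - x (K n)) + x (K n)) atTop (𝓝 (0 + xstar)) :=
    hdz.add hconv
  simpa using this
end
end

section
/- Let x̄, g ∈ 𝕏 and 0 < γ̂ < γ. If x₁ is a global minimizer of x ↦ ⟨g, x − x̄⟩ + (γ/2)‖x − x̄‖² + φ(x) over 𝕏 and x₂ is a global minimizer of x ↦ ⟨g, x − x̄⟩ + (γ̂/2)‖x − x̄‖² + φ(x) over 𝕏, then ‖x₁ − x̄‖ ≤ ‖x₂ − x̄‖, i.e., the proximal step length is monotonically nonincreasing in the proximal parameter. -/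
open Filter Topology RealInnerProductSpace

noncomputable section

variable {E : Type*} [NormedAddCommGroup E] [InnerProductSpace ℝ E] [FiniteDimensional ℝ E]

/-- Monotonicity of the proximal step length in the proximal parameter: if `0 < γ̂ < γ`,
`x₁` globally minimizes `x ↦ ⟨g, x - xb⟩ + (γ/2)‖x - xb‖² + φ(x)` and `x₂` globally
minimizes the same objective with `γ̂` in place of `γ`, then `‖x₁ - xb‖ ≤ ‖x₂ - xb‖`. -/
theorem stmt_8
    (φ : E → EReal) (hbot : ∀ z : E, φ z ≠ ⊥) (hproper : ∃ z : E, φ z ≠ ⊤)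
    (hlsc : LowerSemicontinuous φ)
    (xb g : E) (γh γ : ℝ) (hγh : 0 < γh) (hγ : γh < γ)
    (x₁ x₂ : E)
    (hx₁ : ∀ y : E,
      ((⟪g, x₁ - xb⟫ + γ / 2 * ‖x₁ - xb‖ ^ 2 : ℝ) : EReal) + φ x₁ ≤
      ((⟪g, y - xb⟫ + γ / 2 * ‖y - xb‖ ^ 2 : ℝ) : EReal) + φ y)
    (hx₂ : ∀ y : E,
      ((⟪g, x₂ - xb⟫ + γh / 2 * ‖x₂ - xb‖ ^ 2 : ℝ) : EReal) + φ x₂ ≤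
      ((⟪g, y - xb⟫ + γh / 2 * ‖y - xb‖ ^ 2 : ℝ) : EReal) + φ y) :
    ‖x₁ - xb‖ ≤ ‖x₂ - xb‖ := by
  obtain ⟨z, hz⟩ := hproper
  have hzr : φ z ≠ ⊤ ∧ φ z ≠ ⊥ := ⟨hz, hbot z⟩
  have h1top : φ x₁ ≠ ⊤ := by
    intro h
    have h' := hx₁ z
    rw [h, EReal.add_top_of_ne_bot (EReal.coe_ne_bot _)] at h'
    exact (ne_of_lt (EReal.add_lt_top (EReal.coe_ne_top _) hz)) (top_le_iff.mp h')
  have h2top : φ x₂ ≠ ⊤ := by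
    intro h
    have h' := hx₂ z
    rw [h, EReal.add_top_of_ne_bot (EReal.coe_ne_bot _)] at h'
    exact (ne_of_lt (EReal.add_lt_top (EReal.coe_ne_top _) hz)) (top_le_iff.mp h')
  lift φ x₁ to ℝ using ⟨h1top, hbot x₁⟩ with r₁ hr₁
  lift φ x₂ to ℝ using ⟨h2top, hbot x₂⟩ with r₂ hr₂
  have h1 := hx₁ x₂
  have h2 := hx₂ x₁
  rw [← hr₂] at h1
  rw [← hr₁] at h2
  rw [← EReal.coe_add, ← EReal.coe_add, EReal.coe_le_coe_iff] at h1 h2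
  have hsq : ‖x₁ - xb‖ ^ 2 ≤ ‖x₂ - xb‖ ^ 2 := by nlinarith
  nlinarith [norm_nonneg (x₁ - xb), norm_nonneg (x₂ - xb)]
end
end
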